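/- Let Λ > 0 and β̂ ∈ ℝ, and let β be the maximal solution of β'' - (1/2)(β')² = -e^{-2β}Λ with β(0) = β̂, β'(0) = √((2/3)e^{-2β̂}(e^{3β̂}+Λ)) > 0. Then β is strictly increasing on its interval of existence. -/

import Mathlib

/-!
The Friedmann constraint defect `C = (β')² - (2/3)(e^β + Λ e^{-2β})` satisfies the linear equation
`C' = β' C` along every solution of the ODE, so by Grönwall it stays zero, as it vanishes at `0`.
For `Λ > 0` the constraint forces `(β')² > 0`, so the continuous function `β'` never vanishes and
keeps the sign it has at `0`.
-/

open Real Set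

theorem eqOn_zero_of_hasDerivWithinAt_smul_self {E : Type*} [NormedAddCommGroup E]
    [NormedSpace ℝ E] {f : ℝ → E} {g : ℝ → ℝ} {a b : ℝ}
    (hf : ContinuousOn f (Icc a b)) (hg : ContinuousOn g (Icc a b))
    (hderiv : ∀ x ∈ Ico a b, HasDerivWithinAt f (g x • f x) (Ici x) x) (ha : f a = 0) :
    EqOn f 0 (Icc a b) := by
  obtain ⟨K, hK⟩ := isCompact_Icc.exists_bound_of_continuousOn hg
  refine eq_zero_of_abs_deriv_le_mul_abs_self_of_eq_zero_right (K := K) hf hderiv ha fun x hx => ?_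
  rw [norm_smul]
  exact mul_le_mul_of_nonneg_right (hK x (Ico_subset_Icc_self hx)) (norm_nonneg _)

theorem IsPreconnected.pos_of_ne_zero {X : Type*} [TopologicalSpace X] {s : Set X}
    (hs : IsPreconnected s) {f : X → ℝ} (hf : ContinuousOn f s) {a : X} (ha : a ∈ s)
    (hfa : 0 < f a) (hne : ∀ x ∈ s, f x ≠ 0) {x : X} (hx : x ∈ s) : 0 < f x := by
  by_contra! hfx
  obtain ⟨y, hy, hfy⟩ := hs.intermediate_value hx ha hf ⟨hfx, hfa.le⟩
  exact hne y hy hfy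

noncomputable def friedmannDefect (Λ : ℝ) (β : ℝ → ℝ) (t : ℝ) : ℝ :=
  deriv β t ^ 2 - 2 / 3 * (exp (β t) + Λ * exp (-2 * β t))

section Friedmann

variable {Λ : ℝ} {β : ℝ → ℝ}

theorem friedmannDefect_eq_zero_iff {t : ℝ} :
    friedmannDefect Λ β t = 0 ↔
      deriv β t ^ 2 = 2 / 3 * exp (-2 * β t) * (exp (3 * β t) + Λ) := by
  have hexp : exp (-2 * β t) * (exp (3 * β t) + Λ) = exp (β t) + Λ * exp (-2 * β t) := by
    rw [mul_add, ← exp_add]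
    ring_nf
  rw [friedmannDefect, sub_eq_zero, mul_assoc, hexp]

theorem hasDerivAt_friedmannDefect {t : ℝ} (hβ : DifferentiableAt ℝ β t)
    (hβ' : DifferentiableAt ℝ (deriv β) t)
    (hode : deriv (deriv β) t - 1 / 2 * deriv β t ^ 2 = -exp (-2 * β t) * Λ) :
    HasDerivAt (friedmannDefect Λ β) (deriv β t * friedmannDefect Λ β t) t := by
  have hsq := hβ'.hasDerivAt.fun_pow 2
  have hexp := hβ.hasDerivAt.exp
  have hexp' := (hβ.hasDerivAt.const_mul (-2)).exp
  refine (hsq.fun_sub ((hexp.fun_add (hexp'.const_mul Λ)).const_mul (2 / 3))).congr_deriv ?_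
  rw [friedmannDefect, show deriv (deriv β) t = 1 / 2 * deriv β t ^ 2 - exp (-2 * β t) * Λ by
    linarith]
  norm_num
  ring

theorem friedmannDefect_eqOn_zero {T : ℝ} (hβ : ContDiff ℝ 2 β)
    (hode : ∀ t ∈ Ico (0 : ℝ) T,
      deriv (deriv β) t - 1 / 2 * deriv β t ^ 2 = -exp (-2 * β t) * Λ)
    (h0 : friedmannDefect Λ β 0 = 0) :
    EqOn (friedmannDefect Λ β) 0 (Ico 0 T) := by
  have hdiff : Differentiable ℝ β := hβ.differentiable two_ne_zero
  have hdiff' : Differentiable ℝ (deriv β) := hβ.differentiable_deriv_two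
  have hcont : Continuous (friedmannDefect Λ β) := by
    have := hdiff'.continuous
    unfold friedmannDefect
    fun_prop
  intro t ht
  refine eqOn_zero_of_hasDerivWithinAt_smul_self hcont.continuousOn
    hdiff'.continuous.continuousOn (fun s hs => ?_) h0 ⟨ht.1, le_rfl⟩
  exact (hasDerivAt_friedmannDefect (hdiff s) (hdiff' s)
    (hode s ⟨hs.1, hs.2.trans ht.2⟩)).hasDerivWithinAt

theorem deriv_ne_zero_of_friedmannDefect_eq_zero (hΛ : 0 ≤ Λ) {t : ℝ}
    (h : friedmannDefect Λ β t = 0) : deriv β t ≠ 0 := by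
  intro hzero
  rw [friedmannDefect, hzero] at h
  nlinarith [exp_pos (β t), exp_pos (-2 * β t)]

end Friedmann

/-- For `Λ > 0`, the solution of the conformal-factor ODE with Friedmann-compatible
initial data is strictly increasing. -/
theorem conformal_factor_strictMono (Λ βh T : ℝ) (hΛ : 0 < Λ) (β : ℝ → ℝ)
    (hβ : ContDiff ℝ 2 β) (h0 : β 0 = βh)
    (h1 : deriv β 0 = Real.sqrt ((2/3) * Real.exp (-2*βh) * (Real.exp (3*βh) + Λ)))
    (hode : ∀ t ∈ Ico (0:ℝ) T,
      deriv (deriv β) t - (1/2) * (deriv β t)^2 = -(Real.exp (-2 * β t)) * Λ) :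
    StrictMonoOn β (Ico (0:ℝ) T) := by
  have hdiff : Differentiable ℝ β := hβ.differentiable two_ne_zero
  have hdefect : EqOn (friedmannDefect Λ β) 0 (Ico 0 T) := by
    refine friedmannDefect_eqOn_zero hβ hode ?_
    rw [friedmannDefect_eq_zero_iff, h1, h0, sq_sqrt (by positivity)]
  have hpos : ∀ t ∈ Ico 0 T, 0 < deriv β t := by
    intro t ht
    have h0mem : (0 : ℝ) ∈ Ico 0 T := ⟨le_rfl, ht.1.trans_lt ht.2⟩
    refine (convex_Ico 0 T).isPreconnected.pos_of_ne_zero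
      (hβ.continuous_deriv one_le_two).continuousOn h0mem ?_
      (fun s hs => deriv_ne_zero_of_friedmannDefect_eq_zero hΛ.le (hdefect hs)) ht
    rw [h1]
    positivity
  exact strictMonoOn_of_deriv_pos (convex_Ico 0 T) hdiff.continuous.continuousOn
    fun t ht => hpos t (interior_subset ht)
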